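/- Identification of the treated counterfactual mean with additional confounders in the target population (Theorem S J.1, Scenario 3): under conditions (A1)–(A5), (C1) and (C2), E[Y¹ | S = 0] = E[ (μ₁₁(X)/μ₁₀(X)) · μ′₀₀(X, W) | S = 0 ] = E[ (μ₁₁(X)/μ₁₀(X)) · M(X) | S = 0 ]. -/

import Mathlib

/-!
On `{S = 0}`, integrating `Y¹` against the constant test function gives `E[ρ₁(X) ∣ S = 0]`, and
(A4) rewrites `ρ₁(X)` as `(μ₁₁/μ₁₀)(X) · M(X)`. Since `M` is a version of `E[μ′₀₀(X,W) ∣ X; S = 0]`,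
the tower property with the test function `μ₁₁/μ₁₀` trades `M(X)` for `μ′₀₀(X,W)`. The defining
property of a version only allows bounded test functions, so it is first extended by truncation and
dominated convergence to measurable test functions with integrable products.
-/

open MeasureTheory

/-- `m` is a version of the conditional expectation `E[Z ∣ X; B]`. -/
def IsVersion {Ω E : Type*} [MeasurableSpace Ω] [MeasurableSpace E]
    (P : Measure Ω) (X : Ω → E) (Z : Ω → ℝ) (B : Set Ω) (m : E → ℝ) : Prop :=
  Measurable m ∧
    ∀ h : E → ℝ, Measurable h → (∃ C, ∀ x, |h x| ≤ C) →
      ∫ ω in B, Z ω * h (X ω) ∂P = ∫ ω in B, m (X ω) * h (X ω) ∂P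

/-- Conditional mean `E[Z ∣ B]` of a real random variable given an event `B`. -/
noncomputable def condMean {Ω : Type*} [MeasurableSpace Ω]
    (P : Measure Ω) (Z : Ω → ℝ) (B : Set Ω) : ℝ :=
  (∫ ω in B, Z ω ∂P) / (P B).toReal

open Filter

lemma abs_max_min_neg_le_abs (a : ℝ) {n : ℝ} (hn : 0 ≤ n) : |max (min a n) (-n)| ≤ |a| :=
  abs_le.2 ⟨le_max_of_le_left (le_min (neg_abs_le a) ((neg_nonpos.2 (abs_nonneg a)).trans hn)),
    max_le ((min_le_left a n).trans (le_abs_self a)) ((neg_nonpos.2 hn).trans (abs_nonneg a))⟩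

lemma eventually_max_min_neg_eq (a : ℝ) : ∀ᶠ n : ℕ in atTop, max (min a n) (-n) = a := by
  filter_upwards [eventually_ge_atTop ⌈|a|⌉₊] with n hn
  have ha : |a| ≤ n := (Nat.le_ceil _).trans (Nat.cast_le.2 hn)
  rw [min_eq_left ((le_abs_self a).trans ha), max_eq_left ((neg_le_neg ha).trans (neg_abs_le a))]

lemma tendsto_integral_max_min_neg_mul {Ω : Type*} [MeasurableSpace Ω] {μ : Measure Ω}
    {k f : Ω → ℝ} (hk : AEStronglyMeasurable k μ) (hf : AEStronglyMeasurable f μ)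
    (hkf : Integrable (fun ω => k ω * f ω) μ) :
    Tendsto (fun n : ℕ => ∫ ω, max (min (k ω) n) (-n) * f ω ∂μ) atTop
      (nhds (∫ ω, k ω * f ω ∂μ)) := by
  refine tendsto_integral_of_dominated_convergence (fun ω => |k ω * f ω|)
    (fun n => ((hk.inf aestronglyMeasurable_const).sup aestronglyMeasurable_const).mul hf)
    hkf.abs (fun n => ae_of_all _ fun ω => ?_) (ae_of_all _ fun ω => ?_)
  · rw [Real.norm_eq_abs, abs_mul, abs_mul]
    exact mul_le_mul_of_nonneg_right (abs_max_min_neg_le_abs _ n.cast_nonneg) (abs_nonneg _)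
  · exact tendsto_const_nhds.congr' <|
      (eventually_max_min_neg_eq (k ω)).mono fun n hn => congrArg (· * f ω) hn.symm

namespace IsVersion

variable {Ω E : Type*} [MeasurableSpace Ω] [MeasurableSpace E] {P : Measure Ω} {X : Ω → E}
  {Z : Ω → ℝ} {B : Set Ω} {m : E → ℝ}

lemma setIntegral_eq (hv : IsVersion P X Z B m) : ∫ ω in B, Z ω ∂P = ∫ ω in B, m (X ω) ∂P := by
  simpa using hv.2 (fun _ => 1) measurable_const ⟨1, fun _ => by norm_num⟩

lemma setIntegral_mul_eq (hv : IsVersion P X Z B m) (hX : Measurable X)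
    (hZ : AEStronglyMeasurable Z (P.restrict B)) {h : E → ℝ} (hh : Measurable h)
    (hhZ : Integrable (fun ω => h (X ω) * Z ω) (P.restrict B))
    (hhm : Integrable (fun ω => h (X ω) * m (X ω)) (P.restrict B)) :
    ∫ ω in B, h (X ω) * Z ω ∂P = ∫ ω in B, h (X ω) * m (X ω) ∂P := by
  have hhX : AEStronglyMeasurable (fun ω => h (X ω)) (P.restrict B) :=
    (hh.comp hX).aestronglyMeasurable
  have htrunc (n : ℕ) : ∫ ω in B, max (min (h (X ω)) n) (-n) * Z ω ∂P
      = ∫ ω in B, max (min (h (X ω)) n) (-n) * m (X ω) ∂P := by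
    simpa only [mul_comm] using hv.2 (fun x => max (min (h x) n) (-n))
      ((hh.min measurable_const).max measurable_const)
      ⟨n, fun x => abs_le.2 ⟨le_max_right _ _, max_le (min_le_right _ _)
        ((neg_nonpos.2 n.cast_nonneg).trans n.cast_nonneg)⟩⟩
  exact tendsto_nhds_unique
    ((tendsto_integral_max_min_neg_mul hhX hZ hhZ).congr htrunc)
    (tendsto_integral_max_min_neg_mul hhX (hv.1.comp hX).aestronglyMeasurable hhm)

end IsVersion

theorem treated_mean_identification_scenario3_general
    {Ω E F : Type*} [MeasurableSpace Ω] [MeasurableSpace E] [MeasurableSpace F]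
    (P : Measure Ω)
    (X : Ω → E) (W : Ω → F) (S A Y Y1 : Ω → ℝ)
    (hX : Measurable X) (hW : Measurable W)
    (hS : Measurable S)
    (μ11 μ10 M ρ1 : E → ℝ) (μ00' : E × F → ℝ)
    -- (A2)
    (hμ11obs : IsVersion P X Y {ω | S ω = 1 ∧ A ω = 1} μ11)
    (hμ10obs : IsVersion P X Y {ω | S ω = 1 ∧ A ω = 0} μ10)
    -- (C1, combined with A1)
    (hμ00'obs : IsVersion P (fun ω => (X ω, W ω)) Y {ω | S ω = 0 ∧ A ω = 0} μ00')
    -- M is a version of E[μ′₀₀(X,W) ∣ X; S = 0]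
    (hM : IsVersion P X (fun ω => μ00' (X ω, W ω)) {ω | S ω = 0} M)
    -- (A4), with M in the role of the control conditional mean in the target population
    (hρ1 : IsVersion P X Y1 {ω | S ω = 0} ρ1)
    (hA4 : ∀ᵐ ω ∂P, S ω = 0 →
      μ10 (X ω) ≠ 0 ∧ M (X ω) ≠ 0 ∧
        μ11 (X ω) / μ10 (X ω) = ρ1 (X ω) / M (X ω))
    -- integrability of the expressions inside the identifying expectations
    (hint1 : Integrable (fun ω => μ11 (X ω) / μ10 (X ω) * μ00' (X ω, W ω)) P)
    (hint2 : Integrable (fun ω => μ11 (X ω) / μ10 (X ω) * M (X ω)) P) :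
    condMean P Y1 {ω | S ω = 0}
      = condMean P (fun ω => μ11 (X ω) / μ10 (X ω) * μ00' (X ω, W ω)) {ω | S ω = 0} ∧
    condMean P Y1 {ω | S ω = 0}
      = condMean P (fun ω => μ11 (X ω) / μ10 (X ω) * M (X ω)) {ω | S ω = 0} := by
  set B : Set Ω := {ω | S ω = 0}
  have hB : MeasurableSet B := hS (measurableSet_singleton 0)
  have hratio : Measurable fun x => μ11 x / μ10 x := hμ11obs.1.div hμ10obs.1
  have hY1 : ∫ ω in B, Y1 ω ∂P = ∫ ω in B, μ11 (X ω) / μ10 (X ω) * M (X ω) ∂P := by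
    rw [hρ1.setIntegral_eq]
    refine setIntegral_congr_ae hB ?_
    filter_upwards [hA4] with ω hω hωB
    obtain ⟨-, hM0, hA4ω⟩ := hω hωB
    rw [hA4ω, div_mul_cancel₀ _ hM0]
  have htower : ∫ ω in B, μ11 (X ω) / μ10 (X ω) * μ00' (X ω, W ω) ∂P
      = ∫ ω in B, μ11 (X ω) / μ10 (X ω) * M (X ω) ∂P :=
    hM.setIntegral_mul_eq hX (hμ00'obs.1.comp (hX.prodMk hW)).aestronglyMeasurable hratio
      hint1.restrict hint2.restrict
  exact ⟨by rw [condMean, condMean, hY1, htower], by rw [condMean, condMean, hY1]⟩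

/-- Theorem S J.1 (Scenario 3): identification of the treated counterfactual mean with
additional confounders `W` in the target population, under (A1)–(A5), (C1), (C2):
`E[Y¹ ∣ S = 0] = E[(μ₁₁(X)/μ₁₀(X))·μ′₀₀(X,W) ∣ S = 0]
             = E[(μ₁₁(X)/μ₁₀(X))·M(X) ∣ S = 0]`. -/
theorem treated_mean_identification_scenario3
    {Ω E F : Type*} [MeasurableSpace Ω] [MeasurableSpace E] [MeasurableSpace F]
    (P : Measure Ω) [IsProbabilityMeasure P]
    (X : Ω → E) (W : Ω → F) (S A Y Y0 Y1 : Ω → ℝ)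
    (hX : Measurable X) (hW : Measurable W)
    (hS : Measurable S) (hA : Measurable A) (hY : Measurable Y)
    (hS01 : ∀ ω, S ω = 0 ∨ S ω = 1) (hA01 : ∀ ω, A ω = 0 ∨ A ω = 1)
    (hPS0 : 0 < P {ω | S ω = 0})
    (hPS1A1 : 0 < P {ω | S ω = 1 ∧ A ω = 1})
    (hPS1A0 : 0 < P {ω | S ω = 1 ∧ A ω = 0})
    (hYint : Integrable Y P) (hY0int : Integrable Y0 P) (hY1int : Integrable Y1 P)
    (g q μ11 μ10 M ρ1 : E → ℝ) (μ00' π' : E × F → ℝ)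
    (hg : IsVersion P X S Set.univ g)
    (hg01 : ∀ᵐ ω ∂P, 0 < g (X ω) ∧ g (X ω) < 1)
    (hq : IsVersion P X A {ω | S ω = 1} q)
    -- (A1)
    (hA1 : ∀ᵐ ω ∂P, Y ω = A ω * Y1 ω + (1 - A ω) * Y0 ω)
    -- (A2)
    (hμ11obs : IsVersion P X Y {ω | S ω = 1 ∧ A ω = 1} μ11)
    (hμ11cf : IsVersion P X Y1 {ω | S ω = 1} μ11)
    (hμ10obs : IsVersion P X Y {ω | S ω = 1 ∧ A ω = 0} μ10)
    (hμ10cf : IsVersion P X Y0 {ω | S ω = 1} μ10)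
    -- (A3)
    (hA3 : ∀ᵐ ω ∂P, S ω = 1 → 0 < q (X ω) ∧ q (X ω) < 1)
    -- (A5)
    (hA5 : ∀ᵐ ω ∂P, 0 < g (X ω))
    -- (C1, combined with A1)
    (hPS0A0 : 0 < P {ω | S ω = 0 ∧ A ω = 0})
    (hμ00'obs : IsVersion P (fun ω => (X ω, W ω)) Y {ω | S ω = 0 ∧ A ω = 0} μ00')
    (hμ00'cf : IsVersion P (fun ω => (X ω, W ω)) Y0 {ω | S ω = 0} μ00')
    -- (C2)
    (hπ' : IsVersion P (fun ω => (X ω, W ω)) (fun ω => 1 - A ω) {ω | S ω = 0} π')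
    (hπ'01 : ∀ᵐ ω ∂P, S ω = 0 → 0 < π' (X ω, W ω) ∧ π' (X ω, W ω) < 1)
    -- M is a version of E[μ′₀₀(X,W) ∣ X; S = 0]
    (hM : IsVersion P X (fun ω => μ00' (X ω, W ω)) {ω | S ω = 0} M)
    -- (A4), with M in the role of the control conditional mean in the target population
    (hρ1 : IsVersion P X Y1 {ω | S ω = 0} ρ1)
    (hA4 : ∀ᵐ ω ∂P, S ω = 0 →
      μ10 (X ω) ≠ 0 ∧ M (X ω) ≠ 0 ∧
        μ11 (X ω) / μ10 (X ω) = ρ1 (X ω) / M (X ω))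
    -- integrability of the expressions inside the identifying expectations
    (hint1 : Integrable (fun ω => μ11 (X ω) / μ10 (X ω) * μ00' (X ω, W ω)) P)
    (hint2 : Integrable (fun ω => μ11 (X ω) / μ10 (X ω) * M (X ω)) P) :
    condMean P Y1 {ω | S ω = 0}
      = condMean P (fun ω => μ11 (X ω) / μ10 (X ω) * μ00' (X ω, W ω)) {ω | S ω = 0} ∧
    condMean P Y1 {ω | S ω = 0}
      = condMean P (fun ω => μ11 (X ω) / μ10 (X ω) * M (X ω)) {ω | S ω = 0} :=
  treated_mean_identification_scenario3_general P X W S A Y Y1 hX hW hS μ11 μ10 M ρ1 μ00' hμ11obs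
    hμ10obs hμ00'obs hM hρ1 hA4 hint1 hint2
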